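/- arXiv:0809.2821 — 2 statements merged into one kernel-verified Lean document; each statement's English description precedes it below -/
import Mathlib

section
/- Let T be the rank-4 tensor on indices in {0,1} defined by T_{αβγδ} = 1 if α+β+γ+δ is even and 0 otherwise, and let g^↑_{00}=g^↓_{11}=1 with all other entries of g zero. Then for any spin configuration {m_l} on the links of a finite square lattice (with periodic boundary conditions), the tensor trace tTr[⊗_v T ⊗_l g^{m_l}] equals 1 if the configuration {m_l} is a closed-string configuration (an even number of down spins meet at every vertex) and 0 otherwise. -/
open Finset

/-- Links of the periodic `n × n` square lattice: `(0,x,y)` is the horizontal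
link leaving vertex `(x,y)` to the right, `(1,x,y)` the vertical link leaving
`(x,y)` upwards. -/
abbrev Link (n : ℕ) := Fin 2 × ZMod n × ZMod n

/-- The vertex tensor of the `Z₂` model: `T_{αβγδ} = 1` if `α+β+γ+δ` is even,
`0` otherwise. -/
def Ttens (α β γ δ : ZMod 2) : ℤ := if α + β + γ + δ = 0 then 1 else 0

/-- The link tensor: `g^↑₀₀ = g^↓₁₁ = 1`, all other entries `0`
(`m = true` means spin down, i.e. a string on the link). -/
def gtens (m : Bool) (α β : ZMod 2) : ℤ :=
  if α = β ∧ α = (if m then 1 else 0) then 1 else 0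

/-- String indicator of a spin configuration. -/
def str {n : ℕ} (m : Link n → Bool) (l : Link n) : ZMod 2 := if m l then 1 else 0

/-- A configuration is closed iff an even number of down spins (strings) meet
at every vertex. -/
def ClosedCfg {n : ℕ} [NeZero n] (m : Link n → Bool) : Prop :=
  ∀ x y : ZMod n,
    str m (0, x, y) + str m (0, x - 1, y) + str m (1, x, y) + str m (1, x, y - 1) = 0

instance {n : ℕ} [NeZero n] (m : Link n → Bool) : Decidable (ClosedCfg m) := by
  unfold ClosedCfg; infer_instance

/-- The tensor trace `tTr[⊗_v T ⊗_l g^{m_l}]`: each link carries a pair of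
internal indices (one for each end), the `g`-tensor sits on the link and the
`T`-tensor at vertex `(x,y)` contracts the four adjacent link ends. -/
def tTr {n : ℕ} [NeZero n] (m : Link n → Bool) : ℤ :=
  ∑ α : Link n → ZMod 2 × ZMod 2,
    (∏ l : Link n, gtens (m l) (α l).1 (α l).2) *
      ∏ p : ZMod n × ZMod n,
        Ttens (α (0, p.1, p.2)).1 (α (0, p.1 - 1, p.2)).2
          (α (1, p.1, p.2)).1 (α (1, p.1, p.2 - 1)).2

/-- the tensor trace of the `Z₂` tensor network equals `1` on
closed-string configurations and `0` otherwise. -/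
theorem Z2_tTr_eq_closed_indicator (n : ℕ) [NeZero n] (m : Link n → Bool) :
    tTr m = if ClosedCfg m then 1 else 0 := by
  have hsum : tTr m =
      (∏ l : Link n, gtens (m l) (str m l) (str m l)) *
        ∏ p : ZMod n × ZMod n,
          Ttens (str m (0, p.1, p.2)) (str m (0, p.1 - 1, p.2))
            (str m (1, p.1, p.2)) (str m (1, p.1, p.2 - 1)) := by
    unfold tTr
    rw [Finset.sum_eq_single (fun l => (str m l, str m l))]
    · intro α _ hα
      have : ∃ l : Link n, α l ≠ (str m l, str m l) := by
        by_contra h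
        push_neg at h
        exact hα (funext h)
      obtain ⟨l, hl⟩ := this
      have hg : gtens (m l) (α l).1 (α l).2 = 0 := by
        unfold gtens
        rw [if_neg]
        rintro ⟨h1, h2⟩
        apply hl
        unfold str
        exact Prod.ext h2 (h1 ▸ h2)
      rw [Finset.prod_eq_zero (Finset.mem_univ l) hg, zero_mul]
    · intro h; exact absurd (Finset.mem_univ _) h
  rw [hsum]
  have hg1 : (∏ l : Link n, gtens (m l) (str m l) (str m l)) = 1 := by
    apply Finset.prod_eq_one
    intro l _
    unfold gtens str
    simp
  rw [hg1, one_mul]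
  by_cases hc : ClosedCfg m
  · rw [if_pos hc]
    apply Finset.prod_eq_one
    intro p _
    unfold Ttens
    rw [if_pos (hc p.1 p.2)]
  · rw [if_neg hc]
    unfold ClosedCfg at hc
    push_neg at hc
    obtain ⟨x, y, hxy⟩ := hc
    apply Finset.prod_eq_zero (Finset.mem_univ (x, y))
    unfold Ttens
    exact if_neg hxy
end

section
/- Deformation rule: for the double tensor 𝒯_{i,j,k;t1,s1,u1;t2,s2,u2} = v_i v_j v_k G^{ijk}_{t1 s1 u1} G^{k*j*i*}_{u2 s2 t2} built from string-net G-symbols, one has Σ_m 𝒯_{m,j,i;u1,s1,t1;u2,s2,t2} 𝒯_{m*,k*,l*;r1,t1,s1;r2,t2,s2} = Σ_m 𝒯_{m,i,k*;s1,r1,u1;s2,r2,u2} 𝒯_{m*,l*,j;t1,u1,r1;t2,u2,r2}, for all index values. -/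
private lemma contract_lemma {n : ℕ} (d : Fin (n+1) → ℂ) (A XX YY c : Fin (n+1) → ℂ)
    (F E : Fin (n+1) → Fin (n+1) → ℂ)
    (hA : ∀ m, A m = (∑ x, d x * XX x * F m x) * (∑ y, d y * YY y * E m y))
    (hkey : ∀ x y, (∑ m, d m * F m x * E m y) = if y = x then c x else 0) :
    (∑ m, d m * A m) = ∑ x, d x * d x * c x * XX x * YY x := by
  calc (∑ m, d m * A m)
      = ∑ m, ∑ x, ∑ y, (d x * XX x * (d y * YY y)) * (d m * F m x * E m y) := by
        refine Finset.sum_congr rfl fun m _ => ?_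
        rw [hA m, Finset.sum_mul_sum, Finset.mul_sum]
        refine Finset.sum_congr rfl fun x _ => ?_
        rw [Finset.mul_sum]
        refine Finset.sum_congr rfl fun y _ => ?_
        ring
    _ = ∑ x, ∑ m, ∑ y, (d x * XX x * (d y * YY y)) * (d m * F m x * E m y) :=
        Finset.sum_comm
    _ = ∑ x, ∑ y, ∑ m, (d x * XX x * (d y * YY y)) * (d m * F m x * E m y) :=
        Finset.sum_congr rfl fun x _ => Finset.sum_comm
    _ = ∑ x, ∑ y, (d x * XX x * (d y * YY y)) * (if y = x then c x else 0) := by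
        refine Finset.sum_congr rfl fun x _ => Finset.sum_congr rfl fun y _ => ?_
        rw [← Finset.mul_sum, hkey x y]
    _ = ∑ x, (d x * XX x * (d x * YY x)) * c x := by
        refine Finset.sum_congr rfl fun x _ => ?_
        simp only [mul_ite, mul_zero, Finset.sum_ite_eq', Finset.mem_univ, if_true]
    _ = ∑ x, d x * d x * c x * XX x * YY x := by
        refine Finset.sum_congr rfl fun x _ => ?_
        ring

private lemma contract_lemma2 {n : ℕ} (d : Fin (n+1) → ℂ) (A XX YY c Φ Ξ : Fin (n+1) → ℂ)
    (F E : Fin (n+1) → Fin (n+1) → ℂ)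
    (hA : ∀ m, A m = Φ m * ((∑ x, d x * XX x * F m x) * (∑ y, d y * YY y * E m y)))
    (hswap : ∀ m x, Φ m * F m x = Ξ x * F m x)
    (hkey : ∀ x y, (∑ m, d m * F m x * E m y) = if y = x then c x else 0) :
    (∑ m, d m * A m) = ∑ x, d x * d x * c x * Ξ x * XX x * YY x := by
  calc (∑ m, d m * A m)
      = ∑ m, ∑ x, ∑ y, (d x * XX x * (d y * YY y) * Ξ x) * (d m * F m x * E m y) := by
        refine Finset.sum_congr rfl fun m _ => ?_
        rw [hA m, Finset.sum_mul_sum, Finset.mul_sum, Finset.mul_sum]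
        refine Finset.sum_congr rfl fun x _ => ?_
        rw [Finset.mul_sum, Finset.mul_sum]
        refine Finset.sum_congr rfl fun y _ => ?_
        have h := hswap m x
        linear_combination (d x * XX x * (d y * YY y) * (d m * E m y)) * h
    _ = ∑ x, ∑ m, ∑ y, (d x * XX x * (d y * YY y) * Ξ x) * (d m * F m x * E m y) :=
        Finset.sum_comm
    _ = ∑ x, ∑ y, ∑ m, (d x * XX x * (d y * YY y) * Ξ x) * (d m * F m x * E m y) :=
        Finset.sum_congr rfl fun x _ => Finset.sum_comm
    _ = ∑ x, ∑ y, (d x * XX x * (d y * YY y) * Ξ x) * (if y = x then c x else 0) := by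
        refine Finset.sum_congr rfl fun x _ => Finset.sum_congr rfl fun y _ => ?_
        rw [← Finset.mul_sum, hkey x y]
    _ = ∑ x, (d x * XX x * (d x * YY x) * Ξ x) * c x := by
        refine Finset.sum_congr rfl fun x _ => ?_
        simp only [mul_ite, mul_zero, Finset.sum_ite_eq', Finset.mem_univ, if_true]
    _ = ∑ x, d x * d x * c x * Ξ x * XX x * YY x := by
        refine Finset.sum_congr rfl fun x _ => ?_
        ring

/-- deformation rule of the double tensor `𝒯`.  With
`𝒯_{i,j,k;t₁,s₁,u₁;t₂,s₂,u₂} = v_i v_j v_k G^{ijk}_{t₁s₁u₁} G^{k*j*i*}_{u₂s₂t₂}`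
built from string-net G-symbols (pentagon identity, tetrahedral symmetry,
`d_m = d_{m*}`, decomposition law),
`Σ_m 𝒯_{m,j,i;u₁,s₁,t₁;u₂,s₂,t₂} 𝒯_{m*,k*,l*;r₁,t₁,s₁;r₂,t₂,s₂}
 = Σ_m 𝒯_{m,i,k*;s₁,r₁,u₁;s₂,r₂,u₂} 𝒯_{m*,l*,j;t₁,u₁,r₁;t₂,u₂,r₂}`. -/
theorem double_tensor_deformation_rule (N : ℕ)
    (dual : Fin (N + 1) → Fin (N + 1))
    (hdualdual : ∀ i, dual (dual i) = i)
    (d : Fin (N + 1) → ℝ) (hd : ∀ i, 0 < d i) (hddual : ∀ i, d (dual i) = d i)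
    (v : Fin (N + 1) → ℝ) (hv : ∀ i, (v i) ^ 2 = d i) (hvpos : ∀ i, 0 < v i)
    (hvdual : ∀ i, v (dual i) = v i)
    (B : Fin (N + 1) → Fin (N + 1) → Fin (N + 1) → Prop)
    [∀ a b c, Decidable (B a b c)]
    (G : Fin (N + 1) → Fin (N + 1) → Fin (N + 1) →
         Fin (N + 1) → Fin (N + 1) → Fin (N + 1) → ℂ)
    (htetra : ∀ i j k t s u, G i j k t s u = G k i j u t s ∧
      G i j k t s u = G t (dual s) (dual k) i (dual j) (dual u))
    (horth : ∀ s₁ s₂ t₁ t₂ n n',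
      ∑ m, (d m : ℂ) * G (dual s₁) s₂ n (dual t₂) (dual t₁) m *
          G (dual s₂) s₁ (dual n') (dual t₁) (dual t₂) m
        = (if n = n' then (1 : ℂ) / (d n : ℂ) else 0) *
            (if B (dual s₁) s₂ n then 1 else 0) *
            (if B (dual t₁) t₂ n' then 1 else 0))
    (T : Fin (N + 1) → Fin (N + 1) → Fin (N + 1) →
         Fin (N + 1) → Fin (N + 1) → Fin (N + 1) →
         Fin (N + 1) → Fin (N + 1) → Fin (N + 1) → ℂ)
    (hT : ∀ i j k t₁ s₁ u₁ t₂ s₂ u₂, T i j k t₁ s₁ u₁ t₂ s₂ u₂ =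
      ((v i : ℂ) * (v j : ℂ) * (v k : ℂ)) * G i j k t₁ s₁ u₁ *
        G (dual k) (dual j) (dual i) u₂ s₂ t₂)
    (hdecomp : ∀ i j k t₁ s₁ u₁ t₂ s₂ u₂, T i j k t₁ s₁ u₁ t₂ s₂ u₂ =
      ((v i : ℂ) * (v j : ℂ) * (v k : ℂ)) *
        ∑ n, (d n : ℂ) * G u₂ (dual s₂) i s₁ u₁ n *
          G t₂ (dual u₂) j u₁ t₁ n * G s₂ (dual t₂) k t₁ s₁ n) :
    ∀ i j k l t₁ s₁ u₁ r₁ t₂ s₂ u₂ r₂,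
      ∑ m, T m j i u₁ s₁ t₁ u₂ s₂ t₂ *
          T (dual m) (dual k) (dual l) r₁ t₁ s₁ r₂ t₂ s₂
        = ∑ m, T m i (dual k) s₁ r₁ u₁ s₂ r₂ u₂ *
            T (dual m) (dual l) j t₁ u₁ r₁ t₂ u₂ r₂ := by
  intro i j k l t₁ s₁ u₁ r₁ t₂ s₂ u₂ r₂
  have hσ : ∀ a b c t s u, G a b c t s u = G c a b u t s :=
    fun a b c t s u => (htetra a b c t s u).1
  have hτ : ∀ a b c t s u,
      G a b c t s u = G t (dual s) (dual c) a (dual b) (dual u) :=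
    fun a b c t s u => (htetra a b c t s u).2
  have hdC : ∀ x, (d x : ℂ) ≠ 0 := fun x =>
    Complex.ofReal_ne_zero.mpr (ne_of_gt (hd x))
  have hvC : ∀ x, (v x : ℂ) ≠ 0 := fun x =>
    Complex.ofReal_ne_zero.mpr (ne_of_gt (hvpos x))
  have hv2 : ∀ x, (v x : ℂ) * (v x : ℂ) = (d x : ℂ) := by
    intro x
    rw [← Complex.ofReal_mul, ← hv x, sq]
  -- the star identity (pentagon consequence): product of two G's = Σ of three
  have hstar : ∀ I J K T1 S1 U1 T2 S2 U2,
      G I J K T1 S1 U1 * G (dual K) (dual J) (dual I) U2 S2 T2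
        = ∑ nn, (d nn : ℂ) * G U2 (dual S2) I S1 U1 nn *
            G T2 (dual U2) J U1 T1 nn * G S2 (dual T2) K T1 S1 nn := by
    intro I J K T1 S1 U1 T2 S2 U2
    have h1 := hT I J K T1 S1 U1 T2 S2 U2
    have h2 := hdecomp I J K T1 S1 U1 T2 S2 U2
    have h3 : ((v I : ℂ) * (v J : ℂ) * (v K : ℂ)) *
        (G I J K T1 S1 U1 * G (dual K) (dual J) (dual I) U2 S2 T2)
        = ((v I : ℂ) * (v J : ℂ) * (v K : ℂ)) *
          ∑ nn, (d nn : ℂ) * G U2 (dual S2) I S1 U1 nn *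
            G T2 (dual U2) J U1 T1 nn * G S2 (dual T2) K T1 S1 nn := by
      rw [← mul_assoc, ← h1, h2]
    exact mul_left_cancel₀
      (mul_ne_zero (mul_ne_zero (hvC I) (hvC J)) (hvC K)) h3
  -- the key (orthogonality) lemma in the orientation we need
  have hkeyA : ∀ a b c e nn np,
      (∑ m, (d m : ℂ) * G b (dual a) m c e nn * G a (dual b) (dual m) e c np)
        = (if nn = np then (1 : ℂ) / (d nn : ℂ) else 0) *
            (if B (dual c) a nn then 1 else 0) *
            (if B (dual e) b np then 1 else 0) := by
    intro a b c e nn np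
    have h := horth c a e b nn np
    rw [← h]
    refine Finset.sum_congr rfl fun m _ => ?_
    have e1 : G b (dual a) m c e nn = G (dual c) a nn (dual b) (dual e) m := by
      rw [hσ, hτ, hσ, hσ]; try simp only [hdualdual]
    have e2 : G a (dual b) (dual m) e c np
        = G (dual a) c (dual np) (dual e) (dual b) m := by
      rw [hσ, hσ, hτ, hσ]; try simp only [hdualdual]
    rw [e1, e2]
  -- the other-orientation orthogonality (direct horth instance)
  have halpha : ∀ a b c e m M,
      (∑ w, (d w : ℂ) * G a (dual b) m e c w * G b (dual a) (dual M) c e w)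
        = (if m = M then (1 : ℂ) / (d m : ℂ) else 0) *
            (if B a (dual b) m then 1 else 0) *
            (if B c (dual e) M then 1 else 0) := by
    intro a b c e m M
    have h := horth (dual a) (dual b) (dual c) (dual e) m M
    simp only [hdualdual] at h
    exact h
  -- the swap lemma: trading faces at one vertex for faces at the other
  have hswap : ∀ a b c e M w',
      ((if B a (dual b) M then (1 : ℂ) else 0) *
        (if B c (dual e) M then 1 else 0)) * G b (dual a) (dual M) c e w'
      = ((if B (dual e) b w' then (1 : ℂ) else 0) *
        (if B (dual c) a w' then 1 else 0)) * G b (dual a) (dual M) c e w' := by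
    intro a b c e M w'
    have r1 : (∑ m, (d m : ℂ) * G b (dual a) (dual m) c e w' *
        (∑ w, (d w : ℂ) * G a (dual b) m e c w * G b (dual a) (dual M) c e w))
        = ((if B a (dual b) M then (1 : ℂ) else 0) *
            (if B c (dual e) M then 1 else 0)) * G b (dual a) (dual M) c e w' := by
      have hin : ∀ m, (∑ w, (d w : ℂ) * G a (dual b) m e c w *
          G b (dual a) (dual M) c e w)
          = (if m = M then (1 : ℂ) / (d m : ℂ) else 0) *
              (if B a (dual b) m then 1 else 0) *
              (if B c (dual e) M then 1 else 0) := fun m => halpha a b c e m M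
      calc (∑ m, (d m : ℂ) * G b (dual a) (dual m) c e w' *
          (∑ w, (d w : ℂ) * G a (dual b) m e c w * G b (dual a) (dual M) c e w))
          = ∑ m, (d m : ℂ) * G b (dual a) (dual m) c e w' *
              ((if m = M then (1 : ℂ) / (d m : ℂ) else 0) *
                (if B a (dual b) m then 1 else 0) *
                (if B c (dual e) M then 1 else 0)) :=
            Finset.sum_congr rfl fun m _ => by rw [hin m]
        _ = ((if B a (dual b) M then (1 : ℂ) else 0) *
              (if B c (dual e) M then 1 else 0)) *
                G b (dual a) (dual M) c e w' := by
            rw [Finset.sum_eq_single M]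
            · simp only [if_pos rfl]
              split_ifs <;> field_simp [hdC M] <;> ring
            · intro m _ hm
              simp [hm]
            · intro h
              exact absurd (Finset.mem_univ M) h
    have r2 : (∑ m, (d m : ℂ) * G b (dual a) (dual m) c e w' *
        (∑ w, (d w : ℂ) * G a (dual b) m e c w * G b (dual a) (dual M) c e w))
        = ((if B (dual e) b w' then (1 : ℂ) else 0) *
            (if B (dual c) a w' then 1 else 0)) * G b (dual a) (dual M) c e w' := by
      have hflip : (∑ m, (d m : ℂ) * G b (dual a) (dual m) c e w' *
          (∑ w, (d w : ℂ) * G a (dual b) m e c w * G b (dual a) (dual M) c e w))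
          = ∑ w, (d w : ℂ) * G b (dual a) (dual M) c e w *
              (∑ m, (d m : ℂ) * G a (dual b) m e c w *
                G b (dual a) (dual m) c e w') := by
        calc (∑ m, (d m : ℂ) * G b (dual a) (dual m) c e w' *
            (∑ w, (d w : ℂ) * G a (dual b) m e c w * G b (dual a) (dual M) c e w))
            = ∑ m, ∑ w, (d w : ℂ) * G b (dual a) (dual M) c e w *
                ((d m : ℂ) * G a (dual b) m e c w * G b (dual a) (dual m) c e w') := by
              refine Finset.sum_congr rfl fun m _ => ?_
              rw [Finset.mul_sum]
              refine Finset.sum_congr rfl fun w _ => ?_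
              ring
          _ = ∑ w, ∑ m, (d w : ℂ) * G b (dual a) (dual M) c e w *
                ((d m : ℂ) * G a (dual b) m e c w * G b (dual a) (dual m) c e w') :=
              Finset.sum_comm
          _ = ∑ w, (d w : ℂ) * G b (dual a) (dual M) c e w *
                (∑ m, (d m : ℂ) * G a (dual b) m e c w *
                  G b (dual a) (dual m) c e w') := by
              refine Finset.sum_congr rfl fun w _ => ?_
              rw [Finset.mul_sum]
      rw [hflip]
      have hin : ∀ w, (∑ m, (d m : ℂ) * G a (dual b) m e c w *
          G b (dual a) (dual m) c e w')
          = (if w = w' then (1 : ℂ) / (d w : ℂ) else 0) *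
              (if B (dual e) b w then 1 else 0) *
              (if B (dual c) a w' then 1 else 0) := fun w => hkeyA b a e c w w'
      calc (∑ w, (d w : ℂ) * G b (dual a) (dual M) c e w *
          (∑ m, (d m : ℂ) * G a (dual b) m e c w * G b (dual a) (dual m) c e w'))
          = ∑ w, (d w : ℂ) * G b (dual a) (dual M) c e w *
              ((if w = w' then (1 : ℂ) / (d w : ℂ) else 0) *
                (if B (dual e) b w then 1 else 0) *
                (if B (dual c) a w' then 1 else 0)) :=
            Finset.sum_congr rfl fun w _ => by rw [hin w]
        _ = ((if B (dual e) b w' then (1 : ℂ) else 0) *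
              (if B (dual c) a w' then 1 else 0)) *
                G b (dual a) (dual M) c e w' := by
            rw [Finset.sum_eq_single w']
            · simp only [if_pos rfl]
              split_ifs <;> field_simp [hdC w'] <;> ring
            · intro w _ hw
              simp [hw]
            · intro h
              exact absurd (Finset.mem_univ w') h
    rw [← r1, r2]
  -- ============ cross-channel reduction of the LHS ============
  have p13 : ∀ m, G m j i u₁ s₁ t₁ * G (dual m) (dual k) (dual l) r₁ t₁ s₁
      = ∑ x, (d x : ℂ) *
          (G (dual r₁) k s₁ (dual i) (dual u₁) x * G l r₁ (dual t₁) (dual u₁) j x) *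
          G (dual k) (dual l) (dual m) j (dual i) x := by
    intro m
    have hg1 : G m j i u₁ s₁ t₁ = G s₁ (dual t₁) (dual m) j (dual i) (dual u₁) := by
      rw [hσ, hσ, hτ]; try simp only [hdualdual]
    have hg3 : G (dual m) (dual k) (dual l) r₁ t₁ s₁
        = G m t₁ (dual s₁) (dual r₁) (dual k) l := by
      rw [hσ, hσ, hτ, hσ]; try simp only [hdualdual]
    rw [hg1, hg3]
    have h := hstar s₁ (dual t₁) (dual m) j (dual i) (dual u₁) l (dual k) (dual r₁)
    simp only [hdualdual] at h
    rw [h]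
    exact Finset.sum_congr rfl fun x _ => by ring
  have p24 : ∀ m, G (dual i) (dual j) (dual m) t₂ s₂ u₂ * G l k m s₂ t₂ r₂
      = ∑ y, (d y : ℂ) *
          (G (dual k) r₂ (dual s₂) (dual u₂) (dual i) y * G (dual r₂) (dual l) t₂ j (dual u₂) y) *
          G l k m (dual i) j y := by
    intro m
    have hg2 : G (dual i) (dual j) (dual m) t₂ s₂ u₂
        = G (dual s₂) m t₂ j (dual u₂) (dual i) := by
      rw [hτ, hσ, hσ]; try simp only [hdualdual]
    have hg4 : G l k m s₂ t₂ r₂ = G (dual t₂) (dual m) s₂ (dual k) (dual r₂) l := by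
      rw [hτ, hσ, hσ]; try simp only [hdualdual]
    rw [hg2, hg4]
    have h := hstar (dual s₂) m t₂ j (dual u₂) (dual i) l (dual r₂) (dual k)
    simp only [hdualdual] at h
    rw [h]
    exact Finset.sum_congr rfl fun y _ => by ring
  have hkey1 : ∀ x y, (∑ m, (d m : ℂ) * G (dual k) (dual l) (dual m) j (dual i) x *
      G l k m (dual i) j y)
      = if y = x then (1 / (d x : ℂ)) * (if B i (dual k) x then 1 else 0) *
          (if B (dual j) l x then 1 else 0) else 0 := by
    intro x y
    have h := hkeyA (dual k) l (dual i) j y x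
    simp only [hdualdual] at h
    rw [show (∑ m, (d m : ℂ) * G (dual k) (dual l) (dual m) j (dual i) x *
        G l k m (dual i) j y)
        = ∑ m, (d m : ℂ) * G l k m (dual i) j y *
            G (dual k) (dual l) (dual m) j (dual i) x from
      Finset.sum_congr rfl fun m _ => by ring, h]
    by_cases hyx : y = x
    · subst hyx; simp
    · simp [hyx]
  have hA1 : ∀ m, ((G m j i u₁ s₁ t₁ * G (dual m) (dual k) (dual l) r₁ t₁ s₁) *
      (G (dual i) (dual j) (dual m) t₂ s₂ u₂ * G l k m s₂ t₂ r₂))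
      = (∑ x, (d x : ℂ) *
          (G (dual r₁) k s₁ (dual i) (dual u₁) x * G l r₁ (dual t₁) (dual u₁) j x) *
          G (dual k) (dual l) (dual m) j (dual i) x) *
        (∑ y, (d y : ℂ) *
          (G (dual k) r₂ (dual s₂) (dual u₂) (dual i) y * G (dual r₂) (dual l) t₂ j (dual u₂) y) *
          G l k m (dual i) j y) := by
    intro m
    rw [p13 m, p24 m]
  have main1 : (∑ m, (d m : ℂ) *
      ((G m j i u₁ s₁ t₁ * G (dual m) (dual k) (dual l) r₁ t₁ s₁) *
       (G (dual i) (dual j) (dual m) t₂ s₂ u₂ * G l k m s₂ t₂ r₂)))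
      = ∑ x, (d x : ℂ) * (d x : ℂ) *
          ((1 / (d x : ℂ)) * (if B i (dual k) x then 1 else 0) *
            (if B (dual j) l x then 1 else 0)) *
          (G (dual r₁) k s₁ (dual i) (dual u₁) x * G l r₁ (dual t₁) (dual u₁) j x) *
          (G (dual k) r₂ (dual s₂) (dual u₂) (dual i) x * G (dual r₂) (dual l) t₂ j (dual u₂) x) := by
    exact contract_lemma (fun x => (d x : ℂ))
      (fun m => (G m j i u₁ s₁ t₁ * G (dual m) (dual k) (dual l) r₁ t₁ s₁) *
        (G (dual i) (dual j) (dual m) t₂ s₂ u₂ * G l k m s₂ t₂ r₂))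
      (fun x => G (dual r₁) k s₁ (dual i) (dual u₁) x * G l r₁ (dual t₁) (dual u₁) j x)
      (fun y => G (dual k) r₂ (dual s₂) (dual u₂) (dual i) y * G (dual r₂) (dual l) t₂ j (dual u₂) y)
      (fun x => (1 / (d x : ℂ)) * (if B i (dual k) x then 1 else 0) *
        (if B (dual j) l x then 1 else 0))
      (fun m x => G (dual k) (dual l) (dual m) j (dual i) x)
      (fun m y => G l k m (dual i) j y)
      hA1
      hkey1
  -- ============ insertion lemma for the RHS square ============
  have p13H : ∀ a, G a i (dual k) s₁ r₁ u₁ * G (dual a) (dual l) j t₁ u₁ r₁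
      = ∑ x, (d x : ℂ) *
          (G (dual j) t₁ (dual u₁) (dual s₁) i x * G (dual t₁) l r₁ k (dual s₁) x) *
          G (dual l) j (dual a) i k x := by
    intro a
    have hh1 : G a i (dual k) s₁ r₁ u₁ = G r₁ (dual u₁) (dual a) i k (dual s₁) := by
      rw [hσ, hσ, hτ]; try simp only [hdualdual]
    have hh3 : G (dual a) (dual l) j t₁ u₁ r₁
        = G a u₁ (dual r₁) (dual t₁) (dual l) (dual j) := by
      rw [hσ, hσ, hτ, hσ]; try simp only [hdualdual]
    rw [hh1, hh3]
    have h := hstar r₁ (dual u₁) (dual a) i k (dual s₁) (dual j) (dual l) (dual t₁)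
    simp only [hdualdual] at h
    rw [h]
    exact Finset.sum_congr rfl fun x _ => by ring
  have p24H : ∀ a, G k (dual i) (dual a) u₂ r₂ s₂ * G (dual j) l a r₂ u₂ t₂
      = ∑ y, (d y : ℂ) *
          (G (dual t₂) j u₂ i (dual s₂) y * G (dual l) t₂ (dual r₂) (dual s₂) k y) *
          G (dual j) l a k i y := by
    intro a
    have hh2 : G k (dual i) (dual a) u₂ r₂ s₂
        = G (dual r₂) a u₂ i (dual s₂) k := by
      rw [hτ, hσ, hσ]; try simp only [hdualdual]
    have hh4 : G (dual j) l a r₂ u₂ t₂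
        = G (dual u₂) (dual a) r₂ (dual l) (dual t₂) (dual j) := by
      rw [hτ, hσ, hσ]; try simp only [hdualdual]
    rw [hh2, hh4]
    have h := hstar (dual r₂) a u₂ i (dual s₂) k (dual j) (dual t₂) (dual l)
    simp only [hdualdual] at h
    rw [h]
    exact Finset.sum_congr rfl fun y _ => by ring
  have hkeyH : ∀ x y, (∑ a, (d a : ℂ) * G (dual l) j (dual a) i k x *
      G (dual j) l a k i y)
      = if y = x then (1 / (d x : ℂ)) * (if B (dual k) (dual l) x then 1 else 0) *
          (if B (dual i) (dual j) x then 1 else 0) else 0 := by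
    intro x y
    have h := hkeyA (dual l) (dual j) k i y x
    simp only [hdualdual] at h
    rw [show (∑ a, (d a : ℂ) * G (dual l) j (dual a) i k x * G (dual j) l a k i y)
        = ∑ a, (d a : ℂ) * G (dual j) l a k i y * G (dual l) j (dual a) i k x from
      Finset.sum_congr rfl fun a _ => by ring, h]
    by_cases hyx : y = x
    · subst hyx; simp
    · simp [hyx]
  have hswapH : ∀ a x,
      ((if B i (dual k) a then (1 : ℂ) else 0) * (if B (dual j) l a then 1 else 0)) *
        G (dual l) j (dual a) i k x
      = ((if B (dual k) (dual l) x then (1 : ℂ) else 0) *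
          (if B (dual i) (dual j) x then 1 else 0)) * G (dual l) j (dual a) i k x := by
    intro a x
    have h := hswap (dual j) (dual l) i k a x
    simp only [hdualdual] at h
    linear_combination h
  have hA2 : ∀ a, ((G a i (dual k) s₁ r₁ u₁ * G (dual a) (dual l) j t₁ u₁ r₁) *
      (G k (dual i) (dual a) u₂ r₂ s₂ * G (dual j) l a r₂ u₂ t₂))
      = (∑ x, (d x : ℂ) *
          (G (dual j) t₁ (dual u₁) (dual s₁) i x * G (dual t₁) l r₁ k (dual s₁) x) *
          G (dual l) j (dual a) i k x) *
        (∑ y, (d y : ℂ) *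
          (G (dual t₂) j u₂ i (dual s₂) y * G (dual l) t₂ (dual r₂) (dual s₂) k y) *
          G (dual j) l a k i y) := by
    intro a
    rw [p13H a, p24H a]
  have hA3 : ∀ a, (((if B i (dual k) a then (1 : ℂ) else 0) *
      (if B (dual j) l a then 1 else 0)) *
      ((G a i (dual k) s₁ r₁ u₁ * G (dual a) (dual l) j t₁ u₁ r₁) *
       (G k (dual i) (dual a) u₂ r₂ s₂ * G (dual j) l a r₂ u₂ t₂)))
      = ((if B i (dual k) a then (1 : ℂ) else 0) * (if B (dual j) l a then 1 else 0)) *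
        ((∑ x, (d x : ℂ) *
          (G (dual j) t₁ (dual u₁) (dual s₁) i x * G (dual t₁) l r₁ k (dual s₁) x) *
          G (dual l) j (dual a) i k x) *
        (∑ y, (d y : ℂ) *
          (G (dual t₂) j u₂ i (dual s₂) y * G (dual l) t₂ (dual r₂) (dual s₂) k y) *
          G (dual j) l a k i y)) := by
    intro a
    rw [hA2 a]
  have main3 : (∑ a, (d a : ℂ) *
      (((if B i (dual k) a then (1 : ℂ) else 0) * (if B (dual j) l a then 1 else 0)) *
        ((G a i (dual k) s₁ r₁ u₁ * G (dual a) (dual l) j t₁ u₁ r₁) *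
         (G k (dual i) (dual a) u₂ r₂ s₂ * G (dual j) l a r₂ u₂ t₂))))
      = ∑ a, (d a : ℂ) *
          ((G a i (dual k) s₁ r₁ u₁ * G (dual a) (dual l) j t₁ u₁ r₁) *
           (G k (dual i) (dual a) u₂ r₂ s₂ * G (dual j) l a r₂ u₂ t₂)) := by
    have hLft := contract_lemma2 (fun x => (d x : ℂ))
      (fun a => ((if B i (dual k) a then (1 : ℂ) else 0) *
          (if B (dual j) l a then 1 else 0)) *
        ((G a i (dual k) s₁ r₁ u₁ * G (dual a) (dual l) j t₁ u₁ r₁) *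
         (G k (dual i) (dual a) u₂ r₂ s₂ * G (dual j) l a r₂ u₂ t₂)))
      (fun x => G (dual j) t₁ (dual u₁) (dual s₁) i x * G (dual t₁) l r₁ k (dual s₁) x)
      (fun y => G (dual t₂) j u₂ i (dual s₂) y * G (dual l) t₂ (dual r₂) (dual s₂) k y)
      (fun x => (1 / (d x : ℂ)) * (if B (dual k) (dual l) x then 1 else 0) *
        (if B (dual i) (dual j) x then 1 else 0))
      (fun a => (if B i (dual k) a then (1 : ℂ) else 0) *
        (if B (dual j) l a then 1 else 0))
      (fun x => (if B (dual k) (dual l) x then (1 : ℂ) else 0) *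
        (if B (dual i) (dual j) x then 1 else 0))
      (fun a x => G (dual l) j (dual a) i k x)
      (fun a y => G (dual j) l a k i y)
      hA3
      hswapH
      hkeyH
    have hRgt := contract_lemma (fun x => (d x : ℂ))
      (fun a => (G a i (dual k) s₁ r₁ u₁ * G (dual a) (dual l) j t₁ u₁ r₁) *
        (G k (dual i) (dual a) u₂ r₂ s₂ * G (dual j) l a r₂ u₂ t₂))
      (fun x => G (dual j) t₁ (dual u₁) (dual s₁) i x * G (dual t₁) l r₁ k (dual s₁) x)
      (fun y => G (dual t₂) j u₂ i (dual s₂) y * G (dual l) t₂ (dual r₂) (dual s₂) k y)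
      (fun x => (1 / (d x : ℂ)) * (if B (dual k) (dual l) x then 1 else 0) *
        (if B (dual i) (dual j) x then 1 else 0))
      (fun a x => G (dual l) j (dual a) i k x)
      (fun a y => G (dual j) l a k i y)
      hA2
      hkeyH
    calc (∑ a, (d a : ℂ) *
        (((if B i (dual k) a then (1 : ℂ) else 0) * (if B (dual j) l a then 1 else 0)) *
          ((G a i (dual k) s₁ r₁ u₁ * G (dual a) (dual l) j t₁ u₁ r₁) *
           (G k (dual i) (dual a) u₂ r₂ s₂ * G (dual j) l a r₂ u₂ t₂))))
        = ∑ x, (d x : ℂ) * (d x : ℂ) *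
            ((1 / (d x : ℂ)) * (if B (dual k) (dual l) x then 1 else 0) *
              (if B (dual i) (dual j) x then 1 else 0)) *
            ((if B (dual k) (dual l) x then (1 : ℂ) else 0) *
              (if B (dual i) (dual j) x then 1 else 0)) *
            (G (dual j) t₁ (dual u₁) (dual s₁) i x * G (dual t₁) l r₁ k (dual s₁) x) *
            (G (dual t₂) j u₂ i (dual s₂) x * G (dual l) t₂ (dual r₂) (dual s₂) k x) := hLft
      _ = ∑ x, (d x : ℂ) * (d x : ℂ) *
            ((1 / (d x : ℂ)) * (if B (dual k) (dual l) x then 1 else 0) *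
              (if B (dual i) (dual j) x then 1 else 0)) *
            (G (dual j) t₁ (dual u₁) (dual s₁) i x * G (dual t₁) l r₁ k (dual s₁) x) *
            (G (dual t₂) j u₂ i (dual s₂) x * G (dual l) t₂ (dual r₂) (dual s₂) k x) := by
          refine Finset.sum_congr rfl fun x _ => ?_
          split_ifs <;> ring
      _ = ∑ a, (d a : ℂ) *
            ((G a i (dual k) s₁ r₁ u₁ * G (dual a) (dual l) j t₁ u₁ r₁) *
             (G k (dual i) (dual a) u₂ r₂ s₂ * G (dual j) l a r₂ u₂ t₂)) := hRgt.symm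
  -- ============ endgame ============
  have hL1 : (∑ m, T m j i u₁ s₁ t₁ u₂ s₂ t₂ *
      T (dual m) (dual k) (dual l) r₁ t₁ s₁ r₂ t₂ s₂)
      = ((v i : ℂ) * (v j : ℂ) * (v k : ℂ) * (v l : ℂ)) *
        ∑ m, (d m : ℂ) *
          ((G m j i u₁ s₁ t₁ * G (dual m) (dual k) (dual l) r₁ t₁ s₁) *
           (G (dual i) (dual j) (dual m) t₂ s₂ u₂ * G l k m s₂ t₂ r₂)) := by
    rw [Finset.mul_sum]
    refine Finset.sum_congr rfl fun m _ => ?_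
    rw [hT m j i u₁ s₁ t₁ u₂ s₂ t₂, hT (dual m) (dual k) (dual l) r₁ t₁ s₁ r₂ t₂ s₂]
    simp only [hdualdual, hvdual]
    linear_combination ((v j : ℂ) * (v i : ℂ) * (v k : ℂ) * (v l : ℂ) *
      G m j i u₁ s₁ t₁ * G (dual i) (dual j) (dual m) t₂ s₂ u₂ *
      G (dual m) (dual k) (dual l) r₁ t₁ s₁ * G l k m s₂ t₂ r₂) * hv2 m
  have hR1 : (∑ m, T m i (dual k) s₁ r₁ u₁ s₂ r₂ u₂ *
      T (dual m) (dual l) j t₁ u₁ r₁ t₂ u₂ r₂)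
      = ((v i : ℂ) * (v j : ℂ) * (v k : ℂ) * (v l : ℂ)) *
        ∑ a, (d a : ℂ) *
          ((G a i (dual k) s₁ r₁ u₁ * G (dual a) (dual l) j t₁ u₁ r₁) *
           (G k (dual i) (dual a) u₂ r₂ s₂ * G (dual j) l a r₂ u₂ t₂)) := by
    rw [Finset.mul_sum]
    refine Finset.sum_congr rfl fun m _ => ?_
    rw [hT m i (dual k) s₁ r₁ u₁ s₂ r₂ u₂, hT (dual m) (dual l) j t₁ u₁ r₁ t₂ u₂ r₂]
    simp only [hdualdual, hvdual]
    linear_combination ((v i : ℂ) * (v k : ℂ) * (v l : ℂ) * (v j : ℂ) *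
      G m i (dual k) s₁ r₁ u₁ * G k (dual i) (dual m) u₂ r₂ s₂ *
      G (dual m) (dual l) j t₁ u₁ r₁ * G (dual j) l m r₂ u₂ t₂) * hv2 m
  rw [hL1, main1, hR1]
  congr 1
  calc (∑ x, (d x : ℂ) * (d x : ℂ) *
      ((1 / (d x : ℂ)) * (if B i (dual k) x then 1 else 0) *
        (if B (dual j) l x then 1 else 0)) *
      (G (dual r₁) k s₁ (dual i) (dual u₁) x * G l r₁ (dual t₁) (dual u₁) j x) *
      (G (dual k) r₂ (dual s₂) (dual u₂) (dual i) x * G (dual r₂) (dual l) t₂ j (dual u₂) x))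
      = ∑ a, (d a : ℂ) *
          (((if B i (dual k) a then (1 : ℂ) else 0) * (if B (dual j) l a then 1 else 0)) *
            ((G a i (dual k) s₁ r₁ u₁ * G (dual a) (dual l) j t₁ u₁ r₁) *
             (G k (dual i) (dual a) u₂ r₂ s₂ * G (dual j) l a r₂ u₂ t₂))) := by
        refine Finset.sum_congr rfl fun a _ => ?_
        have hk1 : G (dual r₁) k s₁ (dual i) (dual u₁) a = G a i (dual k) s₁ r₁ u₁ := by
          rw [hσ, hτ]; try simp only [hdualdual]
        have hk2 : G l r₁ (dual t₁) (dual u₁) j a = G (dual a) (dual l) j t₁ u₁ r₁ := by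
          rw [hτ, hσ, hτ]; try simp only [hdualdual]
        have hk3 : G (dual k) r₂ (dual s₂) (dual u₂) (dual i) a
            = G k (dual i) (dual a) u₂ r₂ s₂ := by
          rw [hσ, hσ, hτ, hσ]; try simp only [hdualdual]
        have hk4 : G (dual r₂) (dual l) t₂ j (dual u₂) a = G (dual j) l a r₂ u₂ t₂ := by
          rw [hσ, hτ, hσ, hσ]; try simp only [hdualdual]
        rw [hk1, hk2, hk3, hk4]
        field_simp [hdC a]
    _ = ∑ a, (d a : ℂ) *
          ((G a i (dual k) s₁ r₁ u₁ * G (dual a) (dual l) j t₁ u₁ r₁) *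
           (G k (dual i) (dual a) u₂ r₂ s₂ * G (dual j) l a r₂ u₂ t₂)) := main3
end
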